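/- arXiv:2212.02833 — 2 statements merged into one kernel-verified Lean document; each statement's English description precedes it below -/
import Mathlib

section
/- Let (X, ⊥, F) be an O-space. Then for all A, B ∈ F: B ∩ (A ⊗ B)^⊥ = B ∩ A^⊥ and B ∩ (B ⊗ A)^⊥ = B ∩ A^⊥. -/
variable {X : Type*}

/-- Orthogonal complement: `A^⊥ = {b : b ⊥ a for all a ∈ A}`. -/
def oc (R : X → X → Prop) (A : Set X) : Set X := {b | ∀ a ∈ A, R b a}

/-- Closure: `cl(A) = (A^⊥)^⊥`. -/
def ocl (R : X → X → Prop) (A : Set X) : Set X := oc R (oc R A)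

/-- The zero set `Z = {y : y ⊥ x for all x}`. -/
def zset (R : X → X → Prop) : Set X := {y | ∀ x, R y x}

/-- Sasaki projection `A ⊗ B = cl(B) ∩ (cl(B) ∩ A^⊥)^⊥`. -/
def sproj (R : X → X → Prop) (A B : Set X) : Set X :=
  ocl R B ∩ oc R (ocl R B ∩ oc R A)

/-- Dual of the Sasaki projection: `A ⊕ B = (B^⊥ ⊗ A^⊥)^⊥`. -/
def sdual (R : X → X → Prop) (A B : Set X) : Set X :=
  oc R (sproj R (oc R B) (oc R A))

/-- Set orthogonality: `A ⊥ B` iff `a ⊥ b` for all `a ∈ A`, `b ∈ B`. -/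
def orth (R : X → X → Prop) (A B : Set X) : Prop := ∀ a ∈ A, ∀ b ∈ B, R a b

/-- An O-space: a symmetric relation satisfying Z, together with a family `F`
of subsets satisfying properties F, O and A. -/
structure IsOSpace (R : X → X → Prop) (F : Set (Set X)) : Prop where
  symm : ∀ x y : X, R x y → R y x
  zero : ∀ x : X, R x x → x ∈ zset R
  flats : ∀ A ∈ F, A = ocl R A
  singcl_mem : ∀ x : X, ocl R {x} ∈ F
  z_mem : zset R ∈ F
  oc_mem : ∀ A ∈ F, oc R A ∈ F
  sproj_mem : ∀ A ∈ F, ∀ B ∈ F, sproj R A B ∈ F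
  o1 : ∀ x : X, ∀ A ∈ F, x ∈ ocl R (sproj R {x} A ∪ sproj R {x} (oc R A))
  o2 : ∀ x : X, ∀ A ∈ F, sproj R {x} A ⊆ ocl R ({x} ∪ sproj R {x} (oc R A))
  a : ∀ A ∈ F, ∀ B ∈ F, sproj R A B ⊆ ⋃ a ∈ A, sproj R {a} B

lemma subset_oc_oc {R : X → X → Prop} (hs : ∀ x y, R x y → R y x) (A : Set X) :
    A ⊆ oc R (oc R A) := fun a ha b hb => hs b a (hb a ha)

lemma oc_anti {R : X → X → Prop} {A B : Set X} (hAB : A ⊆ B) : oc R B ⊆ oc R A :=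
  fun x hx a ha => hx a (hAB ha)

lemma sproj_mono {R : X → X → Prop} {A A' B : Set X} (hAA : A ⊆ A') :
    sproj R A B ⊆ sproj R A' B :=
  Set.inter_subset_inter_right _
    (oc_anti (Set.inter_subset_inter_right _ (oc_anti hAA)))

theorem stmt10 (R : X → X → Prop) (F : Set (Set X)) (h : IsOSpace R F)
    (A B : Set X) (hA : A ∈ F) (hB : B ∈ F) :
    B ∩ oc R (sproj R A B) = B ∩ oc R A ∧
    B ∩ oc R (sproj R B A) = B ∩ oc R A := by
  have hs := h.symm
  constructor
  · apply Set.Subset.antisymm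
    · rintro b ⟨hbB, hb2⟩
      refine ⟨hbB, fun a haA => ?_⟩
      have ho1 := h.o1 a B hB
      have hbmem : b ∈ oc R (sproj R {a} B ∪ sproj R {a} (oc R B)) := by
        rintro c (hc | hc)
        · exact hb2 c (sproj_mono (Set.singleton_subset_iff.2 haA) hc)
        · exact hs c b (hc.1 b (subset_oc_oc hs B hbB))
      exact hs a b (ho1 b hbmem)
    · rintro b ⟨hbB, hbA⟩
      exact ⟨hbB, fun c hc => hs c b (hc.2 b ⟨subset_oc_oc hs B hbB, hbA⟩)⟩
  · apply Set.Subset.antisymm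
    · rintro b ⟨hbB, hb2⟩
      refine ⟨hbB, fun a haA => ?_⟩
      set S := sproj R {b} A with hSdef
      set T := sproj R {b} (oc R A) with hTdef
      have hbS : ∀ s ∈ S, R b s := fun s hsS =>
        hb2 s (sproj_mono (Set.singleton_subset_iff.2 hbB) hsS)
      have hSZ : ∀ s ∈ S, R s s := by
        intro s hsS
        have hso2 : s ∈ ocl R ({b} ∪ T) := h.o2 b A hA hsS
        refine hso2 s ?_
        rintro c (hc | hc)
        · rw [Set.mem_singleton_iff] at hc
          rw [hc]
          exact hs b s (hbS s hsS)
        · exact hs c s (hc.1 s hsS.1)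
      have ho1 := h.o1 b A hA
      have hamem : a ∈ oc R (S ∪ T) := by
        rintro c (hc | hc)
        · exact hs c a (h.zero c (hSZ c hc) a)
        · exact hs c a (hc.1 a (subset_oc_oc hs A haA))
      exact ho1 a hamem
    · rintro b ⟨hbB, hbA⟩
      exact ⟨hbB, fun c hc => hs c b (hc.1 b hbA)⟩
end

section
/- Let (X, ⊥, F) be an O-space. Then for all A, B ∈ F: A ⊗ (A^⊥ ⊕ B) = A ∩ B and (A^⊥ ⊕ B) ⊗ A = A ∩ B. -/
variable {X : Type*}

section Aux
variable {X : Type*} {R : X → X → Prop}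

lemma oc_antitone {A B : Set X} (h : A ⊆ B) : oc R B ⊆ oc R A :=
  fun _ hx a ha => hx a (h ha)

lemma subset_ocl (hs : ∀ x y : X, R x y → R y x) (A : Set X) : A ⊆ ocl R A :=
  fun x hx a ha => hs a x (ha x hx)

lemma oc_ocl (hs : ∀ x y : X, R x y → R y x) (A : Set X) :
    oc R (ocl R A) = oc R A := by
  apply Set.Subset.antisymm
  · exact oc_antitone (subset_ocl hs A)
  · exact subset_ocl hs (oc R A)

lemma sproj_mono_left {A₁ A₂ B : Set X} (h : A₁ ⊆ A₂) :
    sproj R A₁ B ⊆ sproj R A₂ B := by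
  intro y hy
  refine ⟨hy.1, ?_⟩
  exact fun a ha => hy.2 a ⟨ha.1, oc_antitone h ha.2⟩

/-- Key lemma: for flats `A, B ∈ F`, `A ∩ (B^⊥ ⊗ A)^⊥ = A ∩ B`. -/
lemma key {F : Set (Set X)} (h : IsOSpace R F) {A B : Set X}
    (hA : A ∈ F) (hB : B ∈ F) :
    A ∩ oc R (sproj R (oc R B) A) = A ∩ B := by
  ext x
  constructor
  · rintro ⟨hxA, hxC⟩
    refine ⟨hxA, ?_⟩
    -- show x ∈ B = ocl B, i.e. x ⊥ b for all b ∈ oc B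
    rw [h.flats B hB]
    intro b hb
    have hO1 := h.o1 b A hA
    have hxU : x ∈ oc R (sproj R {b} A ∪ sproj R {b} (oc R A)) := by
      rintro y (hy | hy)
      · exact hxC y (sproj_mono_left (by simpa using hb) hy)
      · -- y ∈ {b} ⊗ A^⊥ ⊆ cl(A^⊥) = A^⊥
        have hyA : y ∈ oc R A := by
          have := hy.1
          rwa [show ocl R (oc R A) = oc R (ocl R A) from rfl,
            ← h.flats A hA] at this
        exact h.symm y x (hyA x hxA)
    exact h.symm b x (hO1 x hxU)
  · rintro ⟨hxA, hxB⟩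
    refine ⟨hxA, ?_⟩
    intro y hy
    have hx' : x ∈ ocl R A ∩ oc R (oc R B) :=
      ⟨subset_ocl h.symm A hxA, subset_ocl h.symm B hxB⟩
    exact h.symm y x (hy.2 x hx')

end Aux

theorem stmt11 (R : X → X → Prop) (F : Set (Set X)) (h : IsOSpace R F)
    (A B : Set X) (hA : A ∈ F) (hB : B ∈ F) :
    sproj R A (sdual R (oc R A) B) = A ∩ B ∧
    sproj R (sdual R (oc R A) B) A = A ∩ B := by
  -- `sdual R (oc R A) B = (sproj R (oc R B) A)^⊥` since `A` is a flat
  have hD : sdual R (oc R A) B = oc R (sproj R (oc R B) A) := by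
    unfold sdual
    rw [show oc R (oc R A) = ocl R A from rfl, ← h.flats A hA]
  set C := sproj R (oc R B) A with hCdef
  have hCF : C ∈ F := h.sproj_mem _ (h.oc_mem B hB) A hA
  have hCflat : C = ocl R C := h.flats C hCF
  have hCA : C ⊆ A := by
    intro y hy
    have := hy.1
    rwa [← h.flats A hA] at this
  have hkey := key h hA hB
  constructor
  · rw [hD]
    -- sproj A (oc C) = ocl (oc C) ∩ oc (ocl (oc C) ∩ oc A)
    unfold sproj
    have h1 : ocl R (oc R C) = oc R C := by
      rw [show ocl R (oc R C) = oc R (ocl R C) from rfl, ← hCflat]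
    rw [h1]
    have h2 : oc R C ∩ oc R A = oc R A :=
      Set.inter_eq_right.mpr (oc_antitone hCA)
    rw [h2, show oc R (oc R A) = ocl R A from rfl, ← h.flats A hA]
    rw [Set.inter_comm]
    exact hkey
  · rw [hD]
    unfold sproj
    rw [← h.flats A hA]
    have h3 : A ∩ oc R (oc R C) = A ∩ C := by
      rw [show oc R (oc R C) = ocl R C from rfl, ← hCflat]
    rw [h3, Set.inter_eq_right.mpr hCA]
    exact hkey
end
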